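/- arXiv:2104.07263 — 2 statements merged into one kernel-verified Lean document; each statement's English description precedes it below -/
import Mathlib

section
/- Let (Ω, F, P) be a probability space, N₀, P₀ ∈ ℕ, and set N_{ℓ₁} = N₀·2^{ℓ₁}, P_{ℓ₂} = P₀·2^{ℓ₂} for multi-indices ℓ = (ℓ₁,ℓ₂) ∈ ℕ₀². Suppose {Δ_{ℓ,m} : ℓ ∈ ℕ₀², m ∈ ℕ} is a family of mutually independent real-valued random variables such that for each ℓ the Δ_{ℓ,m}, m ∈ ℕ, are identically distributed, and there exist constants c₁, c₂ > 0 with |E[Δ_{ℓ,1}]| ≤ c₁ N_{ℓ₁}^{-1} P_{ℓ₂}^{-1} and Var[Δ_{ℓ,1}] ≤ c₂ N_{ℓ₁}^{-2} P_{ℓ₂}^{-2} for all ℓ ∈ ℕ₀². Suppose A ∈ ℝ satisfies A = Σ_{ℓ ∈ ℕ₀²} E[Δ_{ℓ,1}] (the double series converging absolutely). Fix L₀ ∈ ℕ₀ and for ε ∈ (0,1) set L(ε) = max(⌈log₂(ε⁻¹) + log₂ log₂(ε⁻¹)⌉ − L₀, 1), index set I(ε) = {ℓ ∈ ℕ₀²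 : ℓ₁ + ℓ₂ ≤ L(ε)}, and M_ℓ(ε) = ⌈ε⁻² N_{ℓ₁}^{-3/2} P_{ℓ₂}^{-3/2}⌉. Define the multi-index estimator μ^{MI}(ε) = Σ_{ℓ ∈ I(ε)} M_ℓ(ε)⁻¹ Σ_{m=1}^{M_ℓ(ε)} Δ_{ℓ,m}. Then there exist constants C > 0 and ε₀ ∈ (0,1) such that for all ε ∈ (0, ε₀], E[(μ^{MI}(ε) − A)²] ≤ C ε². -/
open MeasureTheory ProbabilityTheory

/-- Resolution in the timestep direction: `N_{ℓ₁} = N₀ · 2^{ℓ₁}`. -/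
noncomputable def resN (N₀ : ℕ) (ℓ₁ : ℕ) : ℝ := (N₀ : ℝ) * 2 ^ ℓ₁

/-- Resolution in the ensemble-size direction: `P_{ℓ₂} = P₀ · 2^{ℓ₂}`. -/
noncomputable def resP (P₀ : ℕ) (ℓ₂ : ℕ) : ℝ := (P₀ : ℝ) * 2 ^ ℓ₂

/-- Maximal level `L(ε) = max(⌈log₂ ε⁻¹ + log₂ log₂ ε⁻¹⌉ − L₀, 1)`. -/
noncomputable def levelL (L₀ : ℕ) (ε : ℝ) : ℕ :=
  (max (⌈Real.logb 2 ε⁻¹ + Real.logb 2 (Real.logb 2 ε⁻¹)⌉ - (L₀ : ℤ)) 1).toNat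

/-- Triangular multi-index set `{ℓ ∈ ℕ₀² : ℓ₁ + ℓ₂ ≤ L}` as a finite set. -/
def idxSet (L : ℕ) : Finset (ℕ × ℕ) :=
  (Finset.range (L + 1) ×ˢ Finset.range (L + 1)).filter fun ℓ => ℓ.1 + ℓ.2 ≤ L

/-- Number of samples `M_ℓ(ε) = ⌈ε⁻² N_{ℓ₁}^{-3/2} P_{ℓ₂}^{-3/2}⌉`. -/
noncomputable def numSamples (N₀ P₀ : ℕ) (ε : ℝ) (ℓ : ℕ × ℕ) : ℕ :=
  ⌈ε⁻¹ ^ 2 * resN N₀ ℓ.1 ^ (-(3 : ℝ) / 2) * resP P₀ ℓ.2 ^ (-(3 : ℝ) / 2)⌉₊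

/-- The multi-index estimator `μ^{MI}(ε) = Σ_{ℓ ∈ I(ε)} M_ℓ(ε)⁻¹ Σ_{m=1}^{M_ℓ(ε)} Δ_{ℓ,m}`. -/
noncomputable def MIestimator {Ω : Type*} [MeasurableSpace Ω] (N₀ P₀ L₀ : ℕ) (ε : ℝ)
    (Δ : (ℕ × ℕ) × ℕ → Ω → ℝ) (ω : Ω) : ℝ :=
  ∑ ℓ ∈ idxSet (levelL L₀ ε),
    (numSamples N₀ P₀ ε ℓ : ℝ)⁻¹ * ∑ m ∈ Finset.Icc 1 (numSamples N₀ P₀ ε ℓ), Δ (ℓ, m) ω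

/-!
The estimator is unbiased for the truncated sum `∑_{ℓ₁ + ℓ₂ ≤ L} E[Δ_ℓ]`, so its mean squared error
is its variance plus the squared truncation bias. By independence the variance is
`∑_ℓ M_ℓ⁻¹ Var[Δ_ℓ] ≤ c₂ ε² ∑_ℓ (N_{ℓ₁} P_{ℓ₂})^{-1/2}`, a convergent double geometric series.
The bias is at most the tail `c₁ ∑_{ℓ₁ + ℓ₂ > L} 2^{-ℓ₁-ℓ₂} ∝ (L + 3) 2^{-L}`, and the choice of
`L(ε)` makes this `O(ε)`.
-/

open Finset

lemma mem_idxSet {L : ℕ} {ℓ : ℕ × ℕ} : ℓ ∈ idxSet L ↔ ℓ.1 + ℓ.2 ≤ L := by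
  simp only [idxSet, mem_filter, mem_product, mem_range]
  omega

lemma sum_idxSet_half_pow (L : ℕ) :
    ∑ ℓ ∈ idxSet L, (2⁻¹ : ℝ) ^ ℓ.1 * 2⁻¹ ^ ℓ.2 = 4 - (L + 3) * 2⁻¹ ^ L := by
  induction L with
  | zero =>
    rw [show idxSet 0 = {(0, 0)} by decide]
    norm_num
  | succ L ih =>
    have hdisj : Disjoint (idxSet L) (antidiagonal (L + 1)) :=
      disjoint_left.2 fun ℓ h₁ h₂ => by
        rw [mem_idxSet] at h₁
        rw [HasAntidiagonal.mem_antidiagonal] at h₂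
        omega
    have hsplit : idxSet (L + 1) = (idxSet L).disjUnion (antidiagonal (L + 1)) hdisj := by
      ext ℓ
      simp only [mem_disjUnion, mem_idxSet, HasAntidiagonal.mem_antidiagonal]
      omega
    rw [hsplit, sum_disjUnion, ih,
      sum_congr rfl fun ℓ hℓ => by rw [← pow_add, HasAntidiagonal.mem_antidiagonal.1 hℓ],
      sum_const, Nat.card_antidiagonal, nsmul_eq_mul]
    push_cast
    ring

lemma hasSum_pow_mul_pow {r : ℝ} (h₀ : 0 ≤ r) (h₁ : r < 1) :
    HasSum (fun ℓ : ℕ × ℕ => r ^ ℓ.1 * r ^ ℓ.2) ((1 - r)⁻¹ ^ 2) := by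
  have hs := summable_geometric_of_lt_one h₀ h₁
  rw [sq]
  exact (hasSum_geometric_of_lt_one h₀ h₁).mul (hasSum_geometric_of_lt_one h₀ h₁)
    (hs.mul_of_nonneg hs (fun _ => pow_nonneg h₀ _) fun _ => pow_nonneg h₀ _)

lemma abs_sum_sub_le_of_hasSum {α : Type*} {f g : α → ℝ} {a b : ℝ} (hf : HasSum f a)
    (hg : HasSum g b) (hfg : ∀ x, |f x| ≤ g x) (s : Finset α) :
    |∑ x ∈ s, f x - a| ≤ b - ∑ x ∈ s, g x := by
  rw [abs_sub_comm]
  exact (s.hasSum_iff_compl.1 hf).norm_le_of_bounded (s.hasSum_iff_compl.1 hg) fun x => hfg x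

/-- The tail of `∑ 2^{-ℓ₁-ℓ₂}` outside the triangle is `∑_{n > L} (n + 1) 2^{-n} = (L + 3) 2^{-L}`. -/
lemma abs_sum_idxSet_sub_le {f : ℕ × ℕ → ℝ} {a c : ℝ} (hf : HasSum f a)
    (hfc : ∀ ℓ, |f ℓ| ≤ c * (2⁻¹ ^ ℓ.1 * 2⁻¹ ^ ℓ.2)) (L : ℕ) :
    |∑ ℓ ∈ idxSet L, f ℓ - a| ≤ c * ((L + 3) * 2⁻¹ ^ L) := by
  have hg : HasSum (fun ℓ : ℕ × ℕ => c * ((2⁻¹ : ℝ) ^ ℓ.1 * 2⁻¹ ^ ℓ.2)) (c * 4) := by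
    rw [show (4 : ℝ) = (1 - 2⁻¹)⁻¹ ^ 2 by norm_num]
    exact (hasSum_pow_mul_pow (by norm_num) (by norm_num)).mul_left c
  calc |∑ ℓ ∈ idxSet L, f ℓ - a|
      ≤ c * 4 - ∑ ℓ ∈ idxSet L, c * ((2⁻¹ : ℝ) ^ ℓ.1 * 2⁻¹ ^ ℓ.2) :=
        abs_sum_sub_le_of_hasSum hf hg hfc _
    _ = c * ((L + 3) * 2⁻¹ ^ L) := by
        rw [← mul_sum, sum_idxSet_half_pow]
        ring

section Resolutions

variable {N₀ P₀ : ℕ}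

lemma resN_pos (hN₀ : 0 < N₀) (ℓ₁ : ℕ) : 0 < resN N₀ ℓ₁ := by
  unfold resN
  positivity

lemma resP_pos (hP₀ : 0 < P₀) (ℓ₂ : ℕ) : 0 < resP P₀ ℓ₂ := by
  unfold resP
  positivity

lemma inv_resN_mul_inv_resP (ℓ : ℕ × ℕ) :
    (resN N₀ ℓ.1)⁻¹ * (resP P₀ ℓ.2)⁻¹ = ((N₀ : ℝ) * P₀)⁻¹ * (2⁻¹ ^ ℓ.1 * 2⁻¹ ^ ℓ.2) := by
  simp only [resN, resP, mul_inv, inv_pow]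
  ring

lemma numSamples_pos (hN₀ : 0 < N₀) (hP₀ : 0 < P₀) {ε : ℝ} (hε : 0 < ε) (ℓ : ℕ × ℕ) :
    0 < numSamples N₀ P₀ ε ℓ := by
  have := resN_pos hN₀ ℓ.1
  have := resP_pos hP₀ ℓ.2
  exact Nat.ceil_pos.2 (by positivity)

lemma inv_numSamples_le (hN₀ : 0 < N₀) (hP₀ : 0 < P₀) {ε : ℝ} (hε : 0 < ε) (ℓ : ℕ × ℕ) :
    (numSamples N₀ P₀ ε ℓ : ℝ)⁻¹ ≤ ε ^ 2 * (resN N₀ ℓ.1 * resP P₀ ℓ.2) ^ (3 / 2 : ℝ) := by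
  have hN := resN_pos hN₀ ℓ.1
  have hP := resP_pos hP₀ ℓ.2
  calc (numSamples N₀ P₀ ε ℓ : ℝ)⁻¹
      ≤ (ε⁻¹ ^ 2 * resN N₀ ℓ.1 ^ (-(3 : ℝ) / 2) * resP P₀ ℓ.2 ^ (-(3 : ℝ) / 2))⁻¹ :=
        inv_anti₀ (by positivity) (Nat.le_ceil _)
    _ = ε ^ 2 * (resN N₀ ℓ.1 * resP P₀ ℓ.2) ^ (3 / 2 : ℝ) := by
        rw [neg_div, Real.rpow_neg hN.le, Real.rpow_neg hP.le, Real.mul_rpow hN.le hP.le]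
        field_simp

lemma inv_numSamples_mul_le (hN₀ : 0 < N₀) (hP₀ : 0 < P₀) {ε : ℝ} (hε : 0 < ε) (ℓ : ℕ × ℕ) :
    (numSamples N₀ P₀ ε ℓ : ℝ)⁻¹ * ((resN N₀ ℓ.1)⁻¹ ^ 2 * (resP P₀ ℓ.2)⁻¹ ^ 2) ≤
      ε ^ 2 * (((2 : ℝ) ^ (-(1 / 2 : ℝ))) ^ ℓ.1 * ((2 : ℝ) ^ (-(1 / 2 : ℝ))) ^ ℓ.2) := by
  set s := resN N₀ ℓ.1 * resP P₀ ℓ.2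
  have hs : 0 < s := mul_pos (resN_pos hN₀ ℓ.1) (resP_pos hP₀ ℓ.2)
  have hs_ge : (2 : ℝ) ^ (ℓ.1 + ℓ.2) ≤ s := by
    rw [pow_add]
    exact mul_le_mul (le_mul_of_one_le_left (by positivity) (by exact_mod_cast hN₀))
      (le_mul_of_one_le_left (by positivity) (by exact_mod_cast hP₀)) (by positivity)
      (resN_pos hN₀ ℓ.1).le
  calc (numSamples N₀ P₀ ε ℓ : ℝ)⁻¹ * ((resN N₀ ℓ.1)⁻¹ ^ 2 * (resP P₀ ℓ.2)⁻¹ ^ 2)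
      ≤ ε ^ 2 * s ^ (3 / 2 : ℝ) * s ^ (-2 : ℝ) := by
        rw [← mul_pow, ← mul_inv, Real.rpow_neg hs.le, Real.rpow_two, inv_pow]
        gcongr
        exact inv_numSamples_le hN₀ hP₀ hε ℓ
    _ = ε ^ 2 * s ^ (-(1 / 2 : ℝ)) := by
        rw [mul_assoc, ← Real.rpow_add hs]
        norm_num
    _ ≤ ε ^ 2 * ((2 : ℝ) ^ (ℓ.1 + ℓ.2)) ^ (-(1 / 2 : ℝ)) :=
        mul_le_mul_of_nonneg_left
          (Real.rpow_le_rpow_of_nonpos (by positivity) hs_ge (by norm_num)) (by positivity)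
    _ = ε ^ 2 * (((2 : ℝ) ^ (-(1 / 2 : ℝ))) ^ ℓ.1 * ((2 : ℝ) ^ (-(1 / 2 : ℝ))) ^ ℓ.2) := by
        rw [← pow_add, Real.rpow_pow_comm zero_le_two]

lemma sum_inv_numSamples_mul_le (hN₀ : 0 < N₀) (hP₀ : 0 < P₀) {ε : ℝ} (hε : 0 < ε) {c : ℝ}
    (hc : 0 ≤ c) {v : ℕ × ℕ → ℝ}
    (hv : ∀ ℓ, v ℓ ≤ c * (resN N₀ ℓ.1)⁻¹ ^ 2 * (resP P₀ ℓ.2)⁻¹ ^ 2) (I : Finset (ℕ × ℕ)) :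
    ∑ ℓ ∈ I, (numSamples N₀ P₀ ε ℓ : ℝ)⁻¹ * v ℓ ≤
      c * (1 - (2 : ℝ) ^ (-(1 / 2 : ℝ)))⁻¹ ^ 2 * ε ^ 2 := by
  set q : ℝ := 2 ^ (-(1 / 2 : ℝ))
  have hq : q < 1 := Real.rpow_lt_one_of_one_lt_of_neg one_lt_two (by norm_num)
  calc ∑ ℓ ∈ I, (numSamples N₀ P₀ ε ℓ : ℝ)⁻¹ * v ℓ
      ≤ ∑ ℓ ∈ I, c * (ε ^ 2 * (q ^ ℓ.1 * q ^ ℓ.2)) := sum_le_sum fun ℓ _ => by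
        have := mul_le_mul_of_nonneg_left (inv_numSamples_mul_le hN₀ hP₀ hε ℓ) hc
        grw [hv ℓ]
        linarith
    _ ≤ c * (ε ^ 2 * (1 - q)⁻¹ ^ 2) := by
        rw [← mul_sum, ← mul_sum]
        gcongr
        exact sum_le_hasSum _ (fun _ _ => by positivity) (hasSum_pow_mul_pow (by positivity) hq)
    _ = c * (1 - q)⁻¹ ^ 2 * ε ^ 2 := by ring

end Resolutions

section Level

open Real

lemma le_levelL (L₀ : ℕ) (ε : ℝ) :
    logb 2 ε⁻¹ + logb 2 (logb 2 ε⁻¹) - L₀ ≤ levelL L₀ ε := by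
  have h : ⌈logb 2 ε⁻¹ + logb 2 (logb 2 ε⁻¹)⌉ - (L₀ : ℤ) ≤ levelL L₀ ε :=
    (le_max_left _ _).trans (Int.self_le_toNat _)
  have hceil := Int.le_ceil (logb 2 ε⁻¹ + logb 2 (logb 2 ε⁻¹))
  have h' : ((⌈logb 2 ε⁻¹ + logb 2 (logb 2 ε⁻¹)⌉ - (L₀ : ℤ) : ℤ) : ℝ) ≤ (levelL L₀ ε : ℤ) :=
    Int.cast_le.2 h
  push_cast at h'
  linarith

lemma levelL_le (L₀ : ℕ) (ε : ℝ) :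
    (levelL L₀ ε : ℝ) ≤ max (logb 2 ε⁻¹ + logb 2 (logb 2 ε⁻¹) + 1 - L₀) 1 := by
  have h : ((levelL L₀ ε : ℤ) : ℝ) =
      max ((⌈logb 2 ε⁻¹ + logb 2 (logb 2 ε⁻¹)⌉ : ℝ) - L₀) 1 := by
    rw [levelL, Int.toNat_of_nonneg (le_max_of_le_right zero_le_one)]
    push_cast
    rfl
  have hceil := Int.ceil_lt_add_one (logb 2 ε⁻¹ + logb 2 (logb 2 ε⁻¹))
  rw [Int.cast_natCast] at h
  rw [h]
  exact max_le_max (by linarith) le_rfl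

/-- The `log₂ log₂ ε⁻¹` term in `L(ε)` absorbs the factor `L + 3 ≈ log₂ ε⁻¹` in the bias. -/
lemma levelL_add_three_mul_le (L₀ : ℕ) {ε : ℝ} (hε : 0 < ε) (hε₀ : ε ≤ 2⁻¹ ^ (L₀ + 4)) :
    ((levelL L₀ ε : ℝ) + 3) * 2⁻¹ ^ levelL L₀ ε ≤ 2 ^ (L₀ + 2) * ε := by
  set x := logb 2 ε⁻¹
  set y := logb 2 x
  set L := levelL L₀ ε
  have hxL : (L₀ : ℝ) + 4 ≤ x := by
    rw [le_logb_iff_rpow_le one_lt_two (by positivity)]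
    calc (2 : ℝ) ^ ((L₀ : ℝ) + 4) = (2⁻¹ ^ (L₀ + 4))⁻¹ := by
          rw [inv_pow, inv_inv, ← rpow_natCast]
          push_cast
          rfl
      _ ≤ ε⁻¹ := inv_anti₀ hε hε₀
  have hx : 0 < x := by linarith
  have h2x : (2 : ℝ) ^ x = ε⁻¹ := rpow_logb two_pos (by norm_num) (by positivity)
  have h2y : (2 : ℝ) ^ y = x := rpow_logb two_pos (by norm_num) hx
  have hy : y ≤ 2 * x := by
    have hlog2 : 1 / 2 < log 2 := by linarith [log_two_gt_d9]
    rw [show y = log x / log 2 from rfl, div_le_iff₀ (by linarith)]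
    nlinarith [log_le_self hx.le]
  have hpow : (2⁻¹ : ℝ) ^ L ≤ 2 ^ L₀ * ε / x := by
    have h : (2 : ℝ) ^ (x + y - L₀) ≤ 2 ^ L := by
      rw [← rpow_natCast]
      exact rpow_le_rpow_of_exponent_le one_le_two (le_levelL L₀ ε)
    rw [rpow_sub two_pos, rpow_add two_pos, h2x, h2y, rpow_natCast] at h
    rw [inv_pow]
    calc ((2 : ℝ) ^ L)⁻¹ ≤ (ε⁻¹ * x / 2 ^ L₀)⁻¹ := inv_anti₀ (by positivity) h
      _ = 2 ^ L₀ * ε / x := by field_simp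
  have hL3 : (L : ℝ) + 3 ≤ 4 * x := by
    rcases le_max_iff.1 (levelL_le L₀ ε) with h | h <;> linarith
  calc ((L : ℝ) + 3) * 2⁻¹ ^ L ≤ 4 * x * (2 ^ L₀ * ε / x) := by gcongr
    _ = 2 ^ (L₀ + 2) * ε := by
        field_simp
        ring

lemma abs_sum_idxSet_levelL_sub_le {N₀ P₀ L₀ : ℕ} {ε : ℝ} (hε : 0 < ε)
    (hε₀ : ε ≤ 2⁻¹ ^ (L₀ + 4)) {f : ℕ × ℕ → ℝ} {a c : ℝ} (hc : 0 ≤ c) (hf : HasSum f a)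
    (hfc : ∀ ℓ, |f ℓ| ≤ c * (resN N₀ ℓ.1)⁻¹ * (resP P₀ ℓ.2)⁻¹) :
    |∑ ℓ ∈ idxSet (levelL L₀ ε), f ℓ - a| ≤ c * ((N₀ : ℝ) * P₀)⁻¹ * 2 ^ (L₀ + 2) * ε := by
  have hfc' (ℓ : ℕ × ℕ) : |f ℓ| ≤ c * ((N₀ : ℝ) * P₀)⁻¹ * (2⁻¹ ^ ℓ.1 * 2⁻¹ ^ ℓ.2) := by
    rw [mul_assoc, ← inv_resN_mul_inv_resP, ← mul_assoc]
    exact hfc ℓ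
  calc |∑ ℓ ∈ idxSet (levelL L₀ ε), f ℓ - a|
      ≤ c * ((N₀ : ℝ) * P₀)⁻¹ * ((levelL L₀ ε + 3) * 2⁻¹ ^ levelL L₀ ε) :=
        abs_sum_idxSet_sub_le hf hfc' _
    _ ≤ c * ((N₀ : ℝ) * P₀)⁻¹ * (2 ^ (L₀ + 2) * ε) :=
        mul_le_mul_of_nonneg_left (levelL_add_three_mul_le L₀ hε hε₀) (by positivity)
    _ = c * ((N₀ : ℝ) * P₀)⁻¹ * 2 ^ (L₀ + 2) * ε := by ring

end Level

section SampleMeans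

variable {Ω ι : Type*} [MeasurableSpace Ω] {P : Measure Ω}

lemma integral_sub_sq_eq_variance_add [IsProbabilityMeasure P] {Y : Ω → ℝ} (hY : MemLp Y 2 P)
    (a : ℝ) : ∫ ω, (Y ω - a) ^ 2 ∂P = variance Y P + (∫ ω, Y ω ∂P - a) ^ 2 := by
  rw [← variance_sub_const hY.aestronglyMeasurable a,
    variance_eq_sub (X := fun ω => Y ω - a) (hY.sub (memLp_const a)),
    integral_sub (hY.integrable one_le_two) (integrable_const a), integral_const]
  simp

variable {X : ι × ℕ → Ω → ℝ}

lemma integral_sum_sampleMean (hX : ∀ i, Integrable (X i) P)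
    (hid : ∀ ℓ m, IdentDistrib (X (ℓ, m)) (X (ℓ, 1)) P P) {I : Finset ι} {M : ι → ℕ}
    (hM : ∀ ℓ ∈ I, M ℓ ≠ 0) :
    ∫ ω, ∑ ℓ ∈ I, (M ℓ : ℝ)⁻¹ * ∑ m ∈ Icc 1 (M ℓ), X (ℓ, m) ω ∂P =
      ∑ ℓ ∈ I, ∫ ω, X (ℓ, 1) ω ∂P := by
  rw [integral_finsetSum _ fun ℓ _ => (integrable_finsetSum _ fun m _ => hX _).const_mul _]
  refine sum_congr rfl fun ℓ hℓ => ?_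
  rw [integral_const_mul, integral_finsetSum _ fun m _ => hX _,
    sum_congr rfl fun m _ => (hid ℓ m).integral_eq, sum_const, Nat.card_Icc, Nat.add_sub_cancel,
    nsmul_eq_mul, inv_mul_cancel_left₀ (Nat.cast_ne_zero.2 (hM ℓ hℓ))]

lemma variance_sum_sampleMean [IsProbabilityMeasure P] (hX : ∀ i, MemLp (X i) 2 P)
    (hindep : Pairwise fun i j => IndepFun (X i) (X j) P)
    (hid : ∀ ℓ m, IdentDistrib (X (ℓ, m)) (X (ℓ, 1)) P P) (I : Finset ι) (M : ι → ℕ) :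
    variance (fun ω => ∑ ℓ ∈ I, (M ℓ : ℝ)⁻¹ * ∑ m ∈ Icc 1 (M ℓ), X (ℓ, m) ω) P =
      ∑ ℓ ∈ I, (M ℓ : ℝ)⁻¹ * variance (X (ℓ, 1)) P := by
  classical
  set T := I.biUnion fun ℓ => (Icc 1 (M ℓ)).map (Function.Embedding.sectR ℓ ℕ)
  have hT : ∀ i, i ∈ T ↔ i.1 ∈ I ∧ i.2 ∈ Icc 1 (M i.1) := by
    rintro ⟨ℓ, m⟩
    simp [T]
  set Y : ι × ℕ → Ω → ℝ := fun i ω => (M i.1 : ℝ)⁻¹ * X i ω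
  have hflat :
      (fun ω => ∑ ℓ ∈ I, (M ℓ : ℝ)⁻¹ * ∑ m ∈ Icc 1 (M ℓ), X (ℓ, m) ω) = ∑ i ∈ T, Y i := by
    ext ω
    simp only [Finset.sum_apply, sum_finset_product T I (fun ℓ => Icc 1 (M ℓ)) hT, Y, mul_sum]
  rw [hflat, IndepFun.variance_sum (fun i _ => (hX i).const_mul _)
    fun i _ j _ hij => (hindep hij).comp (measurable_const_mul _) (measurable_const_mul _),
    sum_finset_product T I (fun ℓ => Icc 1 (M ℓ)) hT]
  refine sum_congr rfl fun ℓ _ => ?_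
  simp only [variance_const_mul, fun m => (hid ℓ m).variance_eq, sum_const, Nat.card_Icc,
    Nat.add_sub_cancel, nsmul_eq_mul]
  rcases eq_or_ne (M ℓ : ℝ) 0 with h | h
  · simp [h]
  · field_simp

end SampleMeans

theorem mienkf_mse_general {Ω : Type*} [MeasurableSpace Ω] (P : Measure Ω) [IsProbabilityMeasure P]
    (N₀ P₀ : ℕ) (hN₀ : 0 < N₀) (hP₀ : 0 < P₀)
    (Δ : (ℕ × ℕ) × ℕ → Ω → ℝ)
    (hL2 : ∀ i, MemLp (Δ i) 2 P)
    (hindep : iIndepFun Δ P)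
    (hid : ∀ (ℓ : ℕ × ℕ) (m : ℕ), IdentDistrib (Δ (ℓ, m)) (Δ (ℓ, 1)) P P)
    (c₁ c₂ : ℝ) (hc₁ : 0 < c₁) (hc₂ : 0 < c₂)
    (hbias : ∀ ℓ : ℕ × ℕ, |∫ ω, Δ (ℓ, 1) ω ∂P| ≤ c₁ * (resN N₀ ℓ.1)⁻¹ * (resP P₀ ℓ.2)⁻¹)
    (hvar : ∀ ℓ : ℕ × ℕ,
      variance (Δ (ℓ, 1)) P ≤ c₂ * ((resN N₀ ℓ.1)⁻¹) ^ 2 * ((resP P₀ ℓ.2)⁻¹) ^ 2)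
    (A : ℝ) (hA : HasSum (fun ℓ : ℕ × ℕ => ∫ ω, Δ (ℓ, 1) ω ∂P) A)
    (L₀ : ℕ) :
    ∃ C > 0, ∃ ε₀ : ℝ, 0 < ε₀ ∧ ε₀ < 1 ∧
      ∀ ε : ℝ, 0 < ε → ε ≤ ε₀ →
        ∫ ω, (MIestimator N₀ P₀ L₀ ε Δ ω - A) ^ 2 ∂P ≤ C * ε ^ 2 := by
  set q : ℝ := 2 ^ (-(1 / 2 : ℝ))
  have hq : q < 1 := Real.rpow_lt_one_of_one_lt_of_neg one_lt_two (by norm_num)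
  set B := c₁ * ((N₀ : ℝ) * P₀)⁻¹ * 2 ^ (L₀ + 2)
  refine ⟨c₂ * (1 - q)⁻¹ ^ 2 + B ^ 2, by have := sub_pos.2 hq; positivity, 2⁻¹ ^ (L₀ + 4),
    by positivity, pow_lt_one₀ (by norm_num) (by norm_num) (by omega), fun ε hε hεε₀ => ?_⟩
  have hbias_sum := abs_sum_idxSet_levelL_sub_le hε hεε₀ hc₁.le hA hbias
  unfold MIestimator
  rw [integral_sub_sq_eq_variance_add
      (memLp_finsetSum _ fun ℓ _ => (memLp_finsetSum _ fun m _ => hL2 (ℓ, m)).const_mul _),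
    integral_sum_sampleMean (fun i => (hL2 i).integrable one_le_two) hid
      fun ℓ _ => (numSamples_pos hN₀ hP₀ hε ℓ).ne',
    variance_sum_sampleMean hL2 (fun i j hij => hindep.indepFun hij) hid]
  calc _ ≤ c₂ * (1 - q)⁻¹ ^ 2 * ε ^ 2 + (B * ε) ^ 2 :=
        add_le_add (sum_inv_numSamples_mul_le hN₀ hP₀ hε hc₂.le hvar _)
          (sq_le_sq' (abs_le.1 hbias_sum).1 (abs_le.1 hbias_sum).2)
    _ = (c₂ * (1 - q)⁻¹ ^ 2 + B ^ 2) * ε ^ 2 := by ring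

/-- Mean-squared-error half of the MIEnKF complexity theorem. -/
theorem mienkf_mse {Ω : Type*} [MeasurableSpace Ω] (P : Measure Ω) [IsProbabilityMeasure P]
    (N₀ P₀ : ℕ) (hN₀ : 0 < N₀) (hP₀ : 0 < P₀)
    (Δ : (ℕ × ℕ) × ℕ → Ω → ℝ)
    (hL2 : ∀ i, MemLp (Δ i) 2 P)
    (hindep : iIndepFun Δ P)
    (hid : ∀ (ℓ : ℕ × ℕ) (m : ℕ), IdentDistrib (Δ (ℓ, m)) (Δ (ℓ, 1)) P P)
    (c₁ c₂ : ℝ) (hc₁ : 0 < c₁) (hc₂ : 0 < c₂)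
    (hbias : ∀ ℓ : ℕ × ℕ, |∫ ω, Δ (ℓ, 1) ω ∂P| ≤ c₁ * (resN N₀ ℓ.1)⁻¹ * (resP P₀ ℓ.2)⁻¹)
    (hvar : ∀ ℓ : ℕ × ℕ,
      variance (Δ (ℓ, 1)) P ≤ c₂ * ((resN N₀ ℓ.1)⁻¹) ^ 2 * ((resP P₀ ℓ.2)⁻¹) ^ 2)
    (A : ℝ) (hA : HasSum (fun ℓ : ℕ × ℕ => ∫ ω, Δ (ℓ, 1) ω ∂P) A)
    (hAabs : Summable fun ℓ : ℕ × ℕ => |∫ ω, Δ (ℓ, 1) ω ∂P|)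
    (L₀ : ℕ) :
    ∃ C > 0, ∃ ε₀ : ℝ, 0 < ε₀ ∧ ε₀ < 1 ∧
      ∀ ε : ℝ, 0 < ε → ε ≤ ε₀ →
        ∫ ω, (MIestimator N₀ P₀ L₀ ε Δ ω - A) ^ 2 ∂P ≤ C * ε ^ 2 :=
  mienkf_mse_general P N₀ P₀ hN₀ hP₀ Δ hL2 hindep hid c₁ c₂ hc₁ hc₂ hbias hvar A hA L₀
end

section
/- Let (Ω, F, P) be a probability space, N₀, P₀ ∈ ℕ, N_{ℓ₁} = N₀·2^{ℓ₁}, P_{ℓ₂} = P₀·2^{ℓ₂} for ℓ = (ℓ₁,ℓ₂) ∈ ℕ₀². Let {Δ_{ℓ,m}} be mutually independent real-valued random variables, identically distributed in m for each fixed ℓ, with Var[Δ_{ℓ,1}] ≤ c₂ N_{ℓ₁}^{-2} P_{ℓ₂}^{-2} for some c₂ > 0 and all ℓ. For ε ∈ (0,1), L ∈ ℕ, I = {ℓ ∈ ℕ₀² : ℓ₁ + ℓ₂ ≤ L} and M_ℓ = ⌈ε⁻² N_{ℓ₁}^{-3/2} P_{ℓ₂}^{-3/2}⌉, the estimator μ^{MI}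 = Σ_{ℓ ∈ I} M_ℓ⁻¹ Σ_{m=1}^{M_ℓ} Δ_{ℓ,m} satisfies Var[μ^{MI}] = Σ_{ℓ ∈ I} M_ℓ⁻¹ Var[Δ_{ℓ,1}] ≤ C ε², where C > 0 depends only on c₂, N₀, P₀ (and not on ε or L). -/
/-! By independence, the variance of the estimator is `∑_ℓ M_ℓ⁻¹ Var[Δ_{ℓ,1}]`. Since
`M_ℓ ≥ ε⁻² (N_{ℓ₁} P_{ℓ₂})^{-3/2}`, the `ℓ`-th term is at most
`c₂ ε² (N_{ℓ₁} P_{ℓ₂})^{-1/2} = c₂ ε² (N₀ P₀)^{-1/2} 2^{-ℓ₁/2} 2^{-ℓ₂/2}`, and the product of two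
geometric series with ratio `2^{-1/2}` bounds the sum over `idxSet L` uniformly in `L`. -/

open MeasureTheory ProbabilityTheory

universe u

open Finset

namespace ProbabilityTheory

variable {Ω : Type*} [MeasurableSpace Ω] {P : Measure Ω}

lemma iIndepFun.variance_sum_const_mul {ι : Type*} {X : ι → Ω → ℝ} (hX : ∀ i, MemLp (X i) 2 P)
    (hind : iIndepFun X P) (s : Finset ι) (c : ι → ℝ) :
    variance (fun ω => ∑ i ∈ s, c i * X i ω) P = ∑ i ∈ s, c i ^ 2 * variance (X i) P := by
  have hpair : Set.Pairwise ↑s fun i j =>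
      IndepFun (fun ω => c i * X i ω) (fun ω => c j * X j ω) P :=
    fun i _ j _ hij => (hind.indepFun hij).comp (measurable_const_mul _) (measurable_const_mul _)
  simpa only [sum_fn, variance_const_mul] using
    IndepFun.variance_sum (fun i _ => (hX i).const_mul (c i)) hpair

lemma variance_sum_sampleMean {κ : Type*} {X : κ × ℕ → Ω → ℝ} (hX : ∀ i, MemLp (X i) 2 P)
    (hind : iIndepFun X P) (hident : ∀ ℓ m, IdentDistrib (X (ℓ, m)) (X (ℓ, 1)) P P)
    (s : Finset κ) (M : κ → ℕ) :
    variance (fun ω => ∑ ℓ ∈ s, (M ℓ : ℝ)⁻¹ * ∑ m ∈ Icc 1 (M ℓ), X (ℓ, m) ω) P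
      = ∑ ℓ ∈ s, (M ℓ : ℝ)⁻¹ * variance (X (ℓ, 1)) P := by
  have hY : iIndepFun (fun p : Σ _ : κ, ℕ => X (p.1, p.2)) P :=
    hind.precomp fun p q h => by cases p; cases q; simp_all [Prod.ext_iff]
  have key := hY.variance_sum_const_mul (fun p => hX _) (s.sigma fun ℓ => Icc 1 (M ℓ))
    (fun p => (M p.1 : ℝ)⁻¹)
  simp only [sum_sigma, ← mul_sum, (hident _ _).variance_eq, sum_const, Nat.card_Icc,
    Nat.add_sub_cancel, nsmul_eq_mul] at key
  rw [key]
  refine sum_congr rfl fun ℓ _ => ?_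
  rcases eq_or_ne (M ℓ : ℝ) 0 with h | h
  · simp [h]
  · field_simp

end ProbabilityTheory

lemma rpow_three_halves_mul_inv_sq {x : ℝ} (hx : 0 < x) :
    x ^ ((3 : ℝ) / 2) * (x⁻¹) ^ 2 = x ^ (-(1 : ℝ) / 2) := by
  rw [← Real.rpow_two, ← Real.rpow_neg_one, ← Real.rpow_mul hx.le, ← Real.rpow_add hx]
  norm_num

lemma inv_ceil_mul_inv_sq_le {ε x y : ℝ} (hε : 0 < ε) (hx : 0 < x) (hy : 0 < y) :
    (⌈ε⁻¹ ^ 2 * x ^ (-(3 : ℝ) / 2) * y ^ (-(3 : ℝ) / 2)⌉₊ : ℝ)⁻¹ * ((x⁻¹) ^ 2 * (y⁻¹) ^ 2)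
      ≤ ε ^ 2 * x ^ (-(1 : ℝ) / 2) * y ^ (-(1 : ℝ) / 2) := calc
  _ ≤ (ε⁻¹ ^ 2 * x ^ (-(3 : ℝ) / 2) * y ^ (-(3 : ℝ) / 2))⁻¹ * ((x⁻¹) ^ 2 * (y⁻¹) ^ 2) := by
    gcongr
    exact Nat.le_ceil _
  _ = ε ^ 2 * (x ^ ((3 : ℝ) / 2) * (x⁻¹) ^ 2) * (y ^ ((3 : ℝ) / 2) * (y⁻¹) ^ 2) := by
    rw [neg_div, Real.rpow_neg hx.le, Real.rpow_neg hy.le]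
    field_simp
  _ = ε ^ 2 * x ^ (-(1 : ℝ) / 2) * y ^ (-(1 : ℝ) / 2) := by
    rw [rpow_three_halves_mul_inv_sq hx, rpow_three_halves_mul_inv_sq hy]

lemma mul_two_pow_rpow {c : ℝ} (hc : 0 ≤ c) (n : ℕ) (y : ℝ) :
    (c * 2 ^ n) ^ y = c ^ y * ((2 : ℝ) ^ y) ^ n := by
  rw [Real.mul_rpow hc (by positivity), Real.rpow_pow_comm zero_le_two]

lemma inv_numSamples_mul_inv_sq_le {N₀ P₀ : ℕ} (hN₀ : 0 < N₀) (hP₀ : 0 < P₀) {ε : ℝ} (hε : 0 < ε)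
    (ℓ : ℕ × ℕ) :
    (numSamples N₀ P₀ ε ℓ : ℝ)⁻¹ * ((resN N₀ ℓ.1)⁻¹ ^ 2 * (resP P₀ ℓ.2)⁻¹ ^ 2)
      ≤ (N₀ : ℝ) ^ (-(1 : ℝ) / 2) * (P₀ : ℝ) ^ (-(1 : ℝ) / 2)
          * (((2 : ℝ) ^ (-(1 : ℝ) / 2)) ^ ℓ.1 * ((2 : ℝ) ^ (-(1 : ℝ) / 2)) ^ ℓ.2) * ε ^ 2 := by
  have hN : 0 < resN N₀ ℓ.1 := by unfold resN; positivity
  have hP : 0 < resP P₀ ℓ.2 := by unfold resP; positivity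
  refine (inv_ceil_mul_inv_sq_le hε hN hP).trans_eq ?_
  simp only [resN, resP, mul_two_pow_rpow (Nat.cast_nonneg _)]
  ring

lemma sum_idxSet_pow_mul_pow_le {x y : ℝ} (hx₀ : 0 ≤ x) (hx₁ : x < 1) (hy₀ : 0 ≤ y) (hy₁ : y < 1)
    (L : ℕ) : ∑ ℓ ∈ idxSet L, x ^ ℓ.1 * y ^ ℓ.2 ≤ (1 - x)⁻¹ * (1 - y)⁻¹ := calc
  _ ≤ ∑ ℓ ∈ range (L + 1) ×ˢ range (L + 1), x ^ ℓ.1 * y ^ ℓ.2 :=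
    sum_le_sum_of_subset_of_nonneg (filter_subset _ _) fun _ _ _ => by positivity
  _ = (∑ i ∈ range (L + 1), x ^ i) * ∑ j ∈ range (L + 1), y ^ j := by
    rw [sum_product, sum_mul_sum]
  _ ≤ (1 - x)⁻¹ * (1 - y)⁻¹ := by
    have hx := geom_sum_Ico_le_of_lt_one (m := 0) (n := L + 1) hx₀ hx₁
    have hy := geom_sum_Ico_le_of_lt_one (m := 0) (n := L + 1) hy₀ hy₁
    rw [← range_eq_Ico, pow_zero, one_div] at hx hy
    gcongr

/-- Statistical-error (variance) bound in the proof of the MIEnKF complexity theorem: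
the variance of the multi-index estimator equals the level-wise sum
`Σ_{ℓ ∈ I} M_ℓ⁻¹ Var[Δ_{ℓ,1}]`, which is bounded by `C ε²` with `C` depending only on
`c₂`, `N₀`, `P₀` (and not on `ε` or `L`). -/
theorem mienkf_variance_bound (N₀ P₀ : ℕ) (hN₀ : 0 < N₀) (hP₀ : 0 < P₀)
    (c₂ : ℝ) (hc₂ : 0 < c₂) :
    ∃ C > (0 : ℝ),
      ∀ (Ω : Type u) (_ : MeasurableSpace Ω) (P : Measure Ω), IsProbabilityMeasure P →
        ∀ (Δ : (ℕ × ℕ) × ℕ → Ω → ℝ),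
          (∀ i, MemLp (Δ i) 2 P) →
          iIndepFun Δ P →
          (∀ (ℓ : ℕ × ℕ) (m : ℕ), IdentDistrib (Δ (ℓ, m)) (Δ (ℓ, 1)) P P) →
          (∀ ℓ : ℕ × ℕ,
            variance (Δ (ℓ, 1)) P ≤ c₂ * ((resN N₀ ℓ.1)⁻¹) ^ 2 * ((resP P₀ ℓ.2)⁻¹) ^ 2) →
          ∀ ε : ℝ, 0 < ε → ε < 1 → ∀ L : ℕ,
            variance
              (fun ω => ∑ ℓ ∈ idxSet L,
                (numSamples N₀ P₀ ε ℓ : ℝ)⁻¹ *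
                  ∑ m ∈ Finset.Icc 1 (numSamples N₀ P₀ ε ℓ), Δ (ℓ, m) ω) P
              = ∑ ℓ ∈ idxSet L, (numSamples N₀ P₀ ε ℓ : ℝ)⁻¹ * variance (Δ (ℓ, 1)) P ∧
            ∑ ℓ ∈ idxSet L, (numSamples N₀ P₀ ε ℓ : ℝ)⁻¹ * variance (Δ (ℓ, 1)) P
              ≤ C * ε ^ 2 := by
  set r : ℝ := 2 ^ (-(1 : ℝ) / 2)
  have hr₀ : 0 ≤ r := by positivity
  have hr₁ : r < 1 := Real.rpow_lt_one_of_one_lt_of_neg one_lt_two (by norm_num)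
  have hr : 0 < 1 - r := by linarith
  refine ⟨c₂ * (N₀ : ℝ) ^ (-(1 : ℝ) / 2) * (P₀ : ℝ) ^ (-(1 : ℝ) / 2) * ((1 - r)⁻¹ * (1 - r)⁻¹),
    by positivity, ?_⟩
  intro Ω _ P _ Δ hΔ hind hident hvar ε hε _ L
  refine ⟨variance_sum_sampleMean hΔ hind hident _ _, ?_⟩
  calc ∑ ℓ ∈ idxSet L, (numSamples N₀ P₀ ε ℓ : ℝ)⁻¹ * variance (Δ (ℓ, 1)) P
      ≤ ∑ ℓ ∈ idxSet L, c₂ *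
          ((numSamples N₀ P₀ ε ℓ : ℝ)⁻¹ * ((resN N₀ ℓ.1)⁻¹ ^ 2 * (resP P₀ ℓ.2)⁻¹ ^ 2)) :=
        sum_le_sum fun ℓ _ =>
          (mul_le_mul_of_nonneg_left (hvar ℓ) (by positivity)).trans_eq (by ring)
    _ ≤ ∑ ℓ ∈ idxSet L, c₂ * ((N₀ : ℝ) ^ (-(1 : ℝ) / 2) * (P₀ : ℝ) ^ (-(1 : ℝ) / 2)
          * (r ^ ℓ.1 * r ^ ℓ.2) * ε ^ 2) :=
        sum_le_sum fun ℓ _ =>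
          mul_le_mul_of_nonneg_left (inv_numSamples_mul_inv_sq_le hN₀ hP₀ hε ℓ) hc₂.le
    _ = c₂ * (N₀ : ℝ) ^ (-(1 : ℝ) / 2) * (P₀ : ℝ) ^ (-(1 : ℝ) / 2)
          * (∑ ℓ ∈ idxSet L, r ^ ℓ.1 * r ^ ℓ.2) * ε ^ 2 := by
        rw [mul_sum, sum_mul]
        exact sum_congr rfl fun _ _ => by ring
    _ ≤ _ := by
        gcongr
        exact sum_idxSet_pow_mul_pow_le hr₀ hr₁ hr₀ hr₁ L
end
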